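/- arXiv:1903.03881 — 6 statements merged into one kernel-verified Lean document; each statement's English description precedes it below -/
import Mathlib

section
/- Let p be a prime and U ⊆ F_p^2 with #U ≤ p. If U is not contained in a line of F_p^2, then U determines at least ⌈(#U + 3)/2⌉ directions. -/
open Finset Polynomial

attribute [local instance] Classical.propDecidable

/-- The line in `(ZMod p)²` with slope `m` (where `none` denotes the vertical
slope `∞`) and "intercept" `c`. -/
noncomputable def lineWithSlope (p : ℕ) [NeZero p] (m : Option (ZMod p)) (c : ZMod p) :
    Finset (ZMod p × ZMod p) :=
  match m with
  | some m => Finset.univ.filter fun q => q.2 = m * q.1 + c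
  | none => Finset.univ.filter fun q => q.1 = c

/-- `ℓ` is `U`-rich: it meets `U` in at least `#U/p + 1` points. -/
def IsRich (p : ℕ) (U ℓ : Finset (ZMod p × ZMod p)) : Prop :=
  (U.card : ℚ) / p + 1 ≤ ((ℓ ∩ U).card : ℚ)

/-- `ℓ` is `U`-poor: it meets `U` in at most `#U/p - 1` points. -/
def IsPoor (p : ℕ) (U ℓ : Finset (ZMod p × ZMod p)) : Prop :=
  ((ℓ ∩ U).card : ℚ) ≤ (U.card : ℚ) / p - 1

/-- `m` is a `U`-rich direction: some line with slope `m` is `U`-rich. -/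
def IsRichDir (p : ℕ) [NeZero p] (U : Finset (ZMod p × ZMod p))
    (m : Option (ZMod p)) : Prop :=
  ∃ c : ZMod p, IsRich p U (lineWithSlope p m c)

/-- `m` is a `U`-special direction: some line with slope `m` is `U`-rich or `U`-poor. -/
def IsSpecialDir (p : ℕ) [NeZero p] (U : Finset (ZMod p × ZMod p))
    (m : Option (ZMod p)) : Prop :=
  ∃ c : ZMod p, IsRich p U (lineWithSlope p m c) ∨ IsPoor p U (lineWithSlope p m c)

/-- `U` determines the direction `m`: some line with slope `m` contains two
distinct points of `U`. -/
def Determines (p : ℕ) [NeZero p] (U : Finset (ZMod p × ZMod p))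
    (m : Option (ZMod p)) : Prop :=
  ∃ c : ZMod p, ∃ u ∈ U, ∃ v ∈ U,
    u ≠ v ∧ u ∈ lineWithSlope p m c ∧ v ∈ lineWithSlope p m c

/-!
Specialising Rédei's polynomial `H(X, m) = ∏_{u ∈ U} (X - (u.2 - u.1 m))` at a slope `m` gives
the polynomial whose roots are the intercepts of the lines of slope `m` through `U`; it divides
`X ^ p - X` exactly when `m` is not determined. Dividing `X ^ p - X` by `H` over `F_p[m]` leaves
a remainder `R` whose `X ^ i`-coefficient has degree at most `p - i` in `m` and vanishes at the
`p - d` undetermined slopes, so `deg R(·, μ) ≤ d`, where `d` counts the determined finite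
slopes. At a determined slope `μ`, a root of `H(·, μ)` of multiplicity `e` is a root of `R` and a
root of multiplicity at least `e - 1` of `1 + R'` (differentiate `H Q = X ^ p - X - R`), so
`#U ≤ deg R + deg (1 + R') ≤ 2 d - 1`. Here `R ≠ 0` since `H(·, μ)` has a double root, and
`1 + R' ≠ 0` since otherwise `H Q = (X - c) ^ p` and `U` lies on a line of slope `μ`. A shear
moving a determined slope to the vertical direction adds `∞` to the count: `#U + 3 ≤ 2 (d + 1)`.
-/

namespace Polynomial

variable {R : Type*}

section Semiring

variable [Semiring R]

def TotalDegreeLE (f : R[X][X]) (k : ℕ) : Prop :=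
  ∀ i j, (f.coeff i).coeff j ≠ 0 → i + j ≤ k

theorem TotalDegreeLE.mono {f : R[X][X]} {k l : ℕ} (hf : f.TotalDegreeLE k) (hkl : k ≤ l) :
    f.TotalDegreeLE l :=
  fun i j h => (hf i j h).trans hkl

theorem TotalDegreeLE.coeff_eq_zero_of_lt {f : R[X][X]} {k i : ℕ} (hf : f.TotalDegreeLE k)
    (hi : k < i) : f.coeff i = 0 := by
  ext j
  by_contra h
  have := hf i j h
  omega

theorem TotalDegreeLE.natDegree_coeff_le {f : R[X][X]} {k : ℕ} (hf : f.TotalDegreeLE k)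
    (i : ℕ) : (f.coeff i).natDegree ≤ k - i :=
  natDegree_le_iff_coeff_eq_zero.mpr fun j hj => by
    by_contra h
    have := hf i j h
    omega

theorem totalDegreeLE_C_mul_X_pow {c : R[X]} {t k : ℕ}
    (hc : ∀ j, c.coeff j ≠ 0 → t + j ≤ k) : (C c * X ^ t).TotalDegreeLE k := by
  intro i j h
  rw [coeff_C_mul_X_pow] at h
  split_ifs at h with hi
  · exact hi ▸ hc j h
  · simp at h

theorem totalDegreeLE_X_pow (t : ℕ) : (X ^ t : R[X][X]).TotalDegreeLE t := by
  simpa using totalDegreeLE_C_mul_X_pow (c := (1 : R[X])) (t := t) fun j hj => by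
    rw [coeff_one] at hj
    split_ifs at hj with h <;> simp_all

theorem TotalDegreeLE.mul {f g : R[X][X]} {a b : ℕ} (hf : f.TotalDegreeLE a)
    (hg : g.TotalDegreeLE b) : (f * g).TotalDegreeLE (a + b) := by
  intro t s h
  rw [coeff_mul, finsetSum_coeff] at h
  obtain ⟨⟨i, i'⟩, hii', h⟩ := Finset.exists_ne_zero_of_sum_ne_zero h
  rw [coeff_mul] at h
  obtain ⟨⟨j, j'⟩, hjj', h⟩ := Finset.exists_ne_zero_of_sum_ne_zero h
  rw [HasAntidiagonal.mem_antidiagonal] at hii' hjj'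
  have := hf i j (left_ne_zero_of_mul h)
  have := hg i' j' (right_ne_zero_of_mul h)
  omega

end Semiring

theorem totalDegreeLE_prod [CommSemiring R] {ι : Type*} (s : Finset ι) (f : ι → R[X][X])
    (k : ι → ℕ) (h : ∀ i ∈ s, (f i).TotalDegreeLE (k i)) :
    (∏ i ∈ s, f i).TotalDegreeLE (∑ i ∈ s, k i) := by
  induction s using Finset.cons_induction with
  | empty => simpa using totalDegreeLE_X_pow (R := R) 0
  | cons a s ha ih =>
    rw [prod_cons, sum_cons]
    exact (h a (mem_cons_self a s)).mul (ih fun i hi => h i (mem_cons_of_mem hi))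

section Ring

variable [Ring R]

theorem TotalDegreeLE.sub {f g : R[X][X]} {k : ℕ} (hf : f.TotalDegreeLE k)
    (hg : g.TotalDegreeLE k) : (f - g).TotalDegreeLE k := by
  intro i j h
  rw [coeff_sub, coeff_sub] at h
  by_cases hfij : (f.coeff i).coeff j = 0
  · exact hg i j (by simpa [hfij] using h)
  · exact hf i j hfij

end Ring

theorem TotalDegreeLE.modByMonic [CommRing R] [Nontrivial R] {f h : R[X][X]} {k : ℕ}
    (hf : f.TotalDegreeLE k) (hmon : h.Monic) (hh : h.TotalDegreeLE h.natDegree) :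
    (f %ₘ h).TotalDegreeLE k := by
  induction hd : f.degree using WellFoundedLT.induction generalizing f with
  | _ d ih =>
  by_cases hlt : f.degree < h.degree
  · rwa [(modByMonic_eq_self_iff hmon).mpr hlt]
  have hf0 : f ≠ 0 := by
    rintro rfl
    exact hlt (bot_lt_iff_ne_bot.mpr (degree_ne_bot.mpr hmon.ne_zero))
  have hhf : h.natDegree ≤ f.natDegree := natDegree_le_natDegree (not_lt.mp hlt)
  have hfk : f.natDegree ≤ k := (Nat.le_add_right _ _).trans
    (hf _ _ (leadingCoeff_ne_zero.mpr (leadingCoeff_ne_zero.mpr hf0)))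
  set z := C f.leadingCoeff * X ^ (f.natDegree - h.natDegree)
  have hz : z.TotalDegreeLE (k - h.natDegree) := totalDegreeLE_C_mul_X_pow fun j hj => by
    have := hf _ j hj
    omega
  have hdvd : h ∣ f - (f - h * z) := by rw [sub_sub_cancel]; exact dvd_mul_right _ _
  rw [modByMonic_eq_of_dvd_sub hmon hdvd]
  exact ih _ (hd ▸ div_wf_lemma ⟨not_lt.mp hlt, hf0⟩ hmon)
    (hf.sub ((hh.mul hz).mono (by omega))) rfl

section Field

variable {K : Type*} [Field K]

theorem isRoot_multiset_prod_X_sub_C {s : Multiset K} {a : K} (ha : a ∈ s) :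
    (s.map fun a => X - C a).prod.IsRoot a :=
  isRoot_of_mem_roots (by rwa [roots_multiset_prod_X_sub_C])

theorem multiset_prod_X_sub_C_dvd_mul_one_add_derivative {s : Multiset K} {f Q R : K[X]}
    (hf : f = (s.map fun a => X - C a).prod * Q + R) (hroots : ∀ a ∈ s, f.IsRoot a)
    (hderiv : derivative f = -1) (hne : R * (1 + derivative R) ≠ 0) :
    (s.map fun a => X - C a).prod ∣ R * (1 + derivative R) := by
  classical
  set H := (s.map fun a => X - C a).prod
  rw [Multiset.prod_X_sub_C_dvd_iff_le_roots hne, Multiset.le_iff_count]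
  intro a
  rw [count_roots, rootMultiplicity_mul hne]
  rcases Nat.eq_zero_or_pos (s.count a) with h0 | hpos
  · omega
  have ha : a ∈ s := Multiset.count_pos.mp hpos
  have hRa : R.IsRoot a := by
    have := hroots a ha
    rwa [hf, IsRoot, eval_add, eval_mul, (isRoot_multiset_prod_X_sub_C ha).eq_zero, zero_mul,
      zero_add] at this
  have hpow : (X - C a) ^ s.count a ∣ H := by
    simpa only [← count_roots, H, roots_multiset_prod_X_sub_C] using pow_rootMultiplicity_dvd H a
  have hder : (X - C a) ^ (s.count a - 1) ∣ 1 + derivative R := by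
    have := pow_sub_one_dvd_derivative_of_pow_dvd (hpow.mul_right Q)
    rwa [show H * Q = f - R by rw [hf]; ring, derivative_sub, hderiv, ← neg_add', dvd_neg] at this
  have h1 := (rootMultiplicity_pos (left_ne_zero_of_mul hne)).mpr hRa
  have h2 := (le_rootMultiplicity_iff (right_ne_zero_of_mul hne)).mpr hder
  omega

theorem eq_C_of_derivative_eq_zero_of_natDegree_lt (p : ℕ) [CharP K p] (hp : p ≠ 0) {g : K[X]}
    (hg : derivative g = 0) (hdeg : g.natDegree < p) : g = C (g.coeff 0) := by
  refine eq_C_of_natDegree_eq_zero ?_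
  have hexp := congrArg natDegree (expand_contract p hg hp)
  rw [natDegree_expand] at hexp
  have : (contract p g).natDegree = 0 := by
    by_contra h
    have := Nat.le_mul_of_pos_left p (Nat.pos_of_ne_zero h)
    omega
  rw [← hexp, this, zero_mul]

end Field

end Polynomial

section Redei

variable {F : Type*} [Field F]

def intercept (m : F) (q : F × F) : F := q.2 - q.1 * m

noncomputable def redeiPoly (U : Finset (F × F)) : F[X][X] :=
  ∏ u ∈ U, (X - C (C u.2 - C u.1 * X))

theorem redeiPoly_monic (U : Finset (F × F)) : (redeiPoly U).Monic :=
  monic_prod_of_monic _ _ fun _ _ => monic_X_sub_C _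

theorem natDegree_redeiPoly (U : Finset (F × F)) : (redeiPoly U).natDegree = #U := by
  rw [redeiPoly, natDegree_prod_of_monic _ _ fun _ _ => monic_X_sub_C _]
  simp only [natDegree_X_sub_C, sum_const, smul_eq_mul, mul_one]

theorem totalDegreeLE_redeiPoly (U : Finset (F × F)) :
    (redeiPoly U).TotalDegreeLE (redeiPoly U).natDegree := by
  rw [natDegree_redeiPoly, card_eq_sum_ones]
  refine totalDegreeLE_prod _ _ _ fun u _ => ?_
  have hlin : (C u.2 - C u.1 * X : F[X]).natDegree ≤ 1 := by compute_degree
  have := (totalDegreeLE_X_pow 1).sub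
    (totalDegreeLE_C_mul_X_pow (c := C u.2 - C u.1 * X) (t := 0) (k := 1) fun j hj => by
      simpa using (le_natDegree_of_ne_zero hj).trans hlin)
  rwa [pow_one, pow_zero, mul_one] at this

theorem map_redeiPoly (U : Finset (F × F)) (m : F) :
    (redeiPoly U).map (evalRingHom m) = ((U.val.map (intercept m)).map fun a => X - C a).prod := by
  rw [redeiPoly, Polynomial.map_prod, prod_eq_multiset_prod, Multiset.map_map]
  congr 1
  refine Multiset.map_congr rfl fun u _ => ?_
  simp [intercept]

theorem isRoot_map_redeiPoly {U : Finset (F × F)} {u : F × F} (hu : u ∈ U)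
    (m : F) : ((redeiPoly U).map (evalRingHom m)).IsRoot (intercept m u) := by
  rw [map_redeiPoly]
  exact isRoot_multiset_prod_X_sub_C (Multiset.mem_map_of_mem _ hu)

variable [Fintype F]

noncomputable def determinedSlopes (U : Finset (F × F)) : Finset F :=
  {m | ¬ Set.InjOn (intercept m) (U : Set (F × F))}

theorem mem_determinedSlopes {U : Finset (F × F)} {m : F} :
    m ∈ determinedSlopes U ↔ ¬ Set.InjOn (intercept m) (U : Set (F × F)) := by
  simp [determinedSlopes]

noncomputable def redeiRem (U : Finset (F × F)) : F[X][X] :=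
  (X ^ Fintype.card F - X) %ₘ redeiPoly U

theorem totalDegreeLE_redeiRem (U : Finset (F × F)) :
    (redeiRem U).TotalDegreeLE (Fintype.card F) := by
  refine TotalDegreeLE.modByMonic ?_ (redeiPoly_monic U) (totalDegreeLE_redeiPoly U)
  exact (totalDegreeLE_X_pow _).sub
    (pow_one (X : F[X][X]) ▸ (totalDegreeLE_X_pow 1).mono Fintype.card_pos)

theorem map_redeiRem (U : Finset (F × F)) (m : F) :
    (redeiRem U).map (evalRingHom m) =
      (X ^ Fintype.card F - X) %ₘ (redeiPoly U).map (evalRingHom m) := by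
  rw [redeiRem, map_modByMonic _ (redeiPoly_monic U)]
  simp

theorem map_redeiRem_eq_zero_iff {U : Finset (F × F)} {m : F} :
    (redeiRem U).map (evalRingHom m) = 0 ↔ Set.InjOn (intercept m) U := by
  rw [map_redeiRem, modByMonic_eq_zero_iff_dvd ((redeiPoly_monic U).map _), map_redeiPoly,
    Multiset.prod_X_sub_C_dvd_iff_le_roots (FiniteField.X_pow_card_sub_X_ne_zero F
      Fintype.one_lt_card), FiniteField.roots_X_pow_card_sub_X]
  constructor
  · intro h x hx y hy
    exact Multiset.inj_on_of_nodup_map (Multiset.nodup_of_le h univ.nodup) x hx y hy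
  · intro h
    exact (Multiset.le_iff_subset (U.nodup.map_on fun x hx y hy => h hx hy)).mpr
      fun a _ => mem_univ a

theorem natDegree_map_redeiRem_le (U : Finset (F × F)) (m : F) :
    ((redeiRem U).map (evalRingHom m)).natDegree ≤ #(determinedSlopes U) := by
  refine natDegree_le_iff_coeff_eq_zero.mpr fun i hi => ?_
  suffices (redeiRem U).coeff i = 0 by rw [coeff_map, this, map_zero]
  have hR := totalDegreeLE_redeiRem U
  rcases le_or_gt i (Fintype.card F) with hiq | hiq
  · -- of degree at most `q - i` in `m`, it vanishes at the `q - #(determinedSlopes U)` others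
    refine eq_zero_of_natDegree_lt_card_of_eval_eq_zero' _ (determinedSlopes U)ᶜ
      (fun m hm => ?_) ?_
    · rw [mem_compl, mem_determinedSlopes, not_not] at hm
      simpa [coeff_map] using congrArg (coeff · i) (map_redeiRem_eq_zero_iff.mpr hm)
    · have := hR.natDegree_coeff_le i
      rw [card_compl]
      omega
  · exact hR.coeff_eq_zero_of_lt hiq

end Redei

section PrimeField

variable {p : ℕ} [Fact p.Prime]

theorem X_pow_sub_X_eq_map_redeiPoly_mul_add (U : Finset (ZMod p × ZMod p)) (m : ZMod p) :
    (X ^ p - X : (ZMod p)[X]) = (redeiPoly U).map (evalRingHom m) *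
      ((X ^ p - X) /ₘ (redeiPoly U).map (evalRingHom m)) + (redeiRem U).map (evalRingHom m) := by
  rw [map_redeiRem, ZMod.card, add_comm, modByMonic_add_div]

theorem exists_intercept_eq_of_one_add_derivative_eq_zero {U : Finset (ZMod p × ZMod p)}
    {m : ZMod p} (hdeg : ((redeiRem U).map (evalRingHom m)).natDegree < p)
    (h : 1 + derivative ((redeiRem U).map (evalRingHom m)) = 0) :
    ∃ c, ∀ u ∈ U, intercept m u = c := by
  set R := (redeiRem U).map (evalRingHom m)
  set H := (redeiPoly U).map (evalRingHom m)
  have hp : 1 < p := (Fact.out : p.Prime).one_lt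
  have hRX : R + X = C ((R + X).coeff 0) := by
    refine eq_C_of_derivative_eq_zero_of_natDegree_lt p (by omega) ?_ ?_
    · rw [derivative_add, derivative_X, add_comm, h]
    · exact (natDegree_add_le _ _).trans_lt (max_lt hdeg (natDegree_X_le.trans_lt hp))
  set c := (R + X).coeff 0
  -- `H` divides `X ^ p - X - R = X ^ p - c = (X - c) ^ p`
  have hdvd : H ∣ (X - C c) ^ p := by
    refine ⟨(X ^ p - X) /ₘ H, ?_⟩
    rw [sub_pow_char, ← C_pow, ZMod.pow_card, ← hRX]
    linear_combination X_pow_sub_X_eq_map_redeiPoly_mul_add U m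
  refine ⟨c, fun u hu => ?_⟩
  have := eval_dvd (x := intercept m u) hdvd
  rw [(isRoot_map_redeiPoly hu m).eq_zero, zero_dvd_iff, eval_pow, eval_sub, eval_X, eval_C,
    pow_eq_zero_iff (by omega), sub_eq_zero] at this
  exact this

theorem card_lt_two_mul_card_determinedSlopes {U : Finset (ZMod p × ZMod p)} {μ : ZMod p}
    (hcard : #U ≤ p) (hμ : μ ∈ determinedSlopes U)
    (hline : ∀ c, ∃ u ∈ U, intercept μ u ≠ c) :
    #U < 2 * #(determinedSlopes U) := by
  set d := #(determinedSlopes U)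
  have hd : 0 < d := card_pos.mpr ⟨μ, hμ⟩
  have hdp : d ≤ p := (card_le_univ _).trans (ZMod.card p).le
  by_cases hdp' : d = p
  · omega
  replace hdp : d < p := lt_of_le_of_ne hdp hdp'
  set R := (redeiRem U).map (evalRingHom μ)
  set H := (redeiPoly U).map (evalRingHom μ)
  have hRdeg : R.natDegree ≤ d := natDegree_map_redeiRem_le U μ
  have hR : R ≠ 0 := mt map_redeiRem_eq_zero_iff.mp (mem_determinedSlopes.mp hμ)
  have h1R : 1 + derivative R ≠ 0 := fun h => by
    obtain ⟨c, hc⟩ := exists_intercept_eq_of_one_add_derivative_eq_zero (hRdeg.trans_lt hdp) h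
    obtain ⟨u, hu, hne⟩ := hline c
    exact hne (hc u hu)
  have hdvd : H ∣ R * (1 + derivative R) := by
    have hid := X_pow_sub_X_eq_map_redeiPoly_mul_add U μ
    rw [map_redeiPoly] at hid
    rw [show H = _ from map_redeiPoly U μ]
    refine multiset_prod_X_sub_C_dvd_mul_one_add_derivative hid (fun a _ => ?_) ?_
      (mul_ne_zero hR h1R)
    · simp [ZMod.pow_card]
    · simp [derivative_X_pow]
  have h1R_deg : (1 + derivative R).natDegree ≤ d - 1 :=
    (natDegree_add_le _ _).trans (max_le (by simp) ((natDegree_derivative_le R).trans (by omega)))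
  calc #U = H.natDegree := by rw [(redeiPoly_monic U).natDegree_map, natDegree_redeiPoly]
    _ ≤ (R * (1 + derivative R)).natDegree := natDegree_le_of_dvd hdvd (mul_ne_zero hR h1R)
    _ ≤ R.natDegree + (1 + derivative R).natDegree := natDegree_mul_le
    _ < 2 * d := by omega

end PrimeField

section Shear

variable {F : Type*} [Field F]

def lineKey : Option F → F × F → F
  | some m => intercept m
  | none => Prod.fst

def shear (μ : F) (q : F × F) : F × F := (intercept μ q, q.1)

theorem shear_injective (μ : F) : Function.Injective (shear μ) := by
  intro u w h
  simp only [shear, intercept, Prod.mk.injEq] at h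
  exact Prod.ext h.2 (by linear_combination h.1 + μ * h.2)

noncomputable def shearSlope (μ : F) : Option F → Option F
  | none => some 0
  | some m => if m = μ then none else some (m - μ)⁻¹

theorem shearSlope_self (μ : F) : shearSlope μ (some μ) = none := by
  simp [shearSlope]

theorem shearSlope_injective (μ : F) : Function.Injective (shearSlope μ) := by
  rintro (_ | m) (_ | m') h <;> simp only [shearSlope] at h <;> (try split_ifs at h) <;>
    simp_all [sub_eq_zero, eq_comm (a := (0 : F))]

theorem exists_lineKey_shearSlope_shear (μ : F) (m : Option F) :
    ∃ a ≠ (0 : F), ∀ q, lineKey (shearSlope μ m) (shear μ q) = a * lineKey m q := by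
  rcases m with _ | m
  · exact ⟨1, one_ne_zero, fun q => by simp [shearSlope, lineKey, shear, intercept]⟩
  by_cases hm : m = μ
  · exact ⟨1, one_ne_zero, fun q => by simp [shearSlope, hm, lineKey, shear]⟩
  have hmμ : m - μ ≠ 0 := sub_ne_zero.mpr hm
  refine ⟨-(m - μ)⁻¹, by simpa using hmμ, fun q => ?_⟩
  simp only [shearSlope, hm, if_false, lineKey, shear, intercept]
  field_simp
  ring

theorem lineKey_shear_eq_iff {μ : F} {m : Option F} {u w : F × F} :
    lineKey (shearSlope μ m) (shear μ u) = lineKey (shearSlope μ m) (shear μ w) ↔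
      lineKey m u = lineKey m w := by
  obtain ⟨a, ha, h⟩ := exists_lineKey_shearSlope_shear μ m
  rw [h, h, mul_right_inj' ha]

end Shear

section Directions

variable {p : ℕ} [Fact p.Prime] {U : Finset (ZMod p × ZMod p)}

theorem mem_lineWithSlope {m : Option (ZMod p)} {c : ZMod p} {q : ZMod p × ZMod p} :
    q ∈ lineWithSlope p m c ↔ lineKey m q = c := by
  rcases m with _ | m
  · simp [lineWithSlope, lineKey]
  · simp only [lineWithSlope, lineKey, intercept, mem_filter, mem_univ, true_and]
    constructor <;> intro h <;> linear_combination h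

theorem determines_iff {m : Option (ZMod p)} :
    Determines p U m ↔ ∃ u ∈ U, ∃ w ∈ U, u ≠ w ∧ lineKey m u = lineKey m w := by
  simp only [Determines, mem_lineWithSlope]
  constructor
  · rintro ⟨c, u, hu, w, hw, huw, rfl, hw'⟩
    exact ⟨u, hu, w, hw, huw, hw'.symm⟩
  · rintro ⟨u, hu, w, hw, huw, h⟩
    exact ⟨_, u, hu, w, hw, huw, rfl, h.symm⟩

theorem determines_some_iff {m : ZMod p} :
    Determines p U (some m) ↔ m ∈ determinedSlopes U := by
  rw [determines_iff, mem_determinedSlopes, Set.InjOn]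
  simp only [lineKey, mem_coe]
  constructor
  · rintro ⟨u, hu, w, hw, huw, h⟩ hinj
    exact huw (hinj hu hw h)
  · intro h
    push Not at h
    obtain ⟨u, hu, w, hw, h, huw⟩ := h
    exact ⟨u, hu, w, hw, huw, h⟩

theorem exists_subset_lineWithSlope_iff {m : Option (ZMod p)} :
    (∃ c, U ⊆ lineWithSlope p m c) ↔ ∀ u ∈ U, ∀ w ∈ U, lineKey m u = lineKey m w := by
  simp only [subset_iff, mem_lineWithSlope]
  constructor
  · rintro ⟨c, h⟩ u hu w hw
    rw [h hu, h hw]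
  · intro h
    rcases U.eq_empty_or_nonempty with rfl | ⟨u, hu⟩
    · exact ⟨0, by simp⟩
    · exact ⟨lineKey m u, fun w hw => h w hw u hu⟩

theorem exists_determines_some (h : ¬ ∃ c, U ⊆ lineWithSlope p none c) :
    ∃ μ, Determines p U (some μ) := by
  rw [exists_subset_lineWithSlope_iff] at h
  push Not at h
  obtain ⟨u, hu, w, hw, huw⟩ := h
  have hx : w.1 - u.1 ≠ 0 := sub_ne_zero.mpr (Ne.symm huw)
  refine ⟨(w.2 - u.2) / (w.1 - u.1),
    determines_iff.mpr ⟨u, hu, w, hw, fun e => huw (e ▸ rfl), ?_⟩⟩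
  simp only [lineKey, intercept]
  field_simp
  ring

theorem determines_image_shear {μ : ZMod p} {m : Option (ZMod p)} :
    Determines p (U.image (shear μ)) (shearSlope μ m) ↔ Determines p U m := by
  simp only [determines_iff, mem_image]
  constructor
  · rintro ⟨_, ⟨u, hu, rfl⟩, _, ⟨w, hw, rfl⟩, huw, h⟩
    exact ⟨u, hu, w, hw, fun e => huw (e ▸ rfl), lineKey_shear_eq_iff.mp h⟩
  · rintro ⟨u, hu, w, hw, huw, h⟩
    exact ⟨_, ⟨u, hu, rfl⟩, _, ⟨w, hw, rfl⟩, (shear_injective μ).ne huw,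
      lineKey_shear_eq_iff.mpr h⟩

theorem ncard_determines_image_shear (μ : ZMod p) :
    {m | Determines p (U.image (shear μ)) m}.ncard = {m | Determines p U m}.ncard := by
  have hbij := Finite.injective_iff_bijective.mp (shearSlope_injective μ)
  rw [← Nat.card_coe_set_eq, ← Nat.card_coe_set_eq]
  exact Nat.card_congr
    ((Equiv.ofBijective _ hbij).subtypeEquiv fun _ => determines_image_shear.symm).symm

theorem exists_subset_lineWithSlope_image_shear_iff (μ : ZMod p) :
    (∃ m c, U.image (shear μ) ⊆ lineWithSlope p m c) ↔
      ∃ m c, U ⊆ lineWithSlope p m c := by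
  simp only [exists_subset_lineWithSlope_iff, forall_mem_image]
  constructor
  · rintro ⟨m', h⟩
    obtain ⟨m, rfl⟩ := (Finite.injective_iff_surjective.mp (shearSlope_injective μ)) m'
    exact ⟨m, fun u hu w hw => lineKey_shear_eq_iff.mp (h hu hw)⟩
  · rintro ⟨m, h⟩
    exact ⟨shearSlope μ m, fun u hu w hw => lineKey_shear_eq_iff.mpr (h u hu w hw)⟩

theorem card_add_three_le_two_mul_ncard_determines (hcard : #U ≤ p)
    (hline : ¬ ∃ m c, U ⊆ lineWithSlope p m c) (hnone : Determines p U none) :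
    #U + 3 ≤ 2 * {m | Determines p U m}.ncard := by
  obtain ⟨μ, hμ⟩ := exists_determines_some (not_exists.mpr fun c h => hline ⟨none, c, h⟩)
  have hline' : ∀ c, ∃ u ∈ U, intercept μ u ≠ c := fun c => by
    by_contra! h
    exact hline ⟨some μ, c, fun u hu => mem_lineWithSlope.mpr (h u hu)⟩
  have hlt := card_lt_two_mul_card_determinedSlopes hcard (determines_some_iff.mp hμ) hline'
  have hdir :
      {m | Determines p U m} = insert none (some '' (determinedSlopes U : Set (ZMod p))) := by
    ext (_ | m) <;> simp [hnone, determines_some_iff]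
  rw [hdir, Set.ncard_insert_of_notMem (by simp),
    Set.ncard_image_of_injective _ (Option.some_injective _), Set.ncard_coe_finset]
  omega

end Directions

theorem redei_szonyi (p : ℕ) [Fact p.Prime] (U : Finset (ZMod p × ZMod p))
    (hcard : U.card ≤ p)
    (hline : ¬ ∃ (m : Option (ZMod p)) (c : ZMod p), U ⊆ lineWithSlope p m c) :
    ⌈((U.card : ℚ) + 3) / 2⌉
      ≤ ({m : Option (ZMod p) | Determines p U m}.ncard : ℤ) := by
  obtain ⟨μ, hμ⟩ := exists_determines_some (not_exists.mpr fun c h => hline ⟨none, c, h⟩)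
  have hcard' : #(U.image (shear μ)) = #U := card_image_of_injective _ (shear_injective μ)
  have key := card_add_three_le_two_mul_ncard_determines (hcard'.trans_le hcard)
    ((exists_subset_lineWithSlope_image_shear_iff μ).not.mpr hline)
    (shearSlope_self μ ▸ determines_image_shear.mpr hμ)
  rw [hcard', ncard_determines_image_shear] at key
  have : (#U : ℚ) + 3 ≤ 2 * {m | Determines p U m}.ncard := by exact_mod_cast key
  rw [Int.ceil_le, div_le_iff₀ two_pos]
  push_cast
  linarith
end

section
/- Let p be a prime and U ⊆ F_p^2 with #U = n·p - r, where n and r are integers with n ≥ 1, 0 ≤ r < p, and p - r ≥ n + 1. Then every point of U lies on at least one U-rich line. -/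
open Finset Polynomial

attribute [local instance] Classical.propDecidable

/-! Through a point `u ∈ U` pass exactly `p + 1` lines, one for each direction, and they partition
the rest of the plane. Counting `U` along them gives `∑ₘ #(ℓₘ ∩ U) = (#U - 1) + (p + 1) = np - r + p`,
which exceeds `(p + 1) n` precisely because `p - r > n`. Hence some line through `u` carries at least
`n + 1 ≥ #U/p + 1` points of `U`. -/

section LinesThrough

variable {p : ℕ}

def interceptThrough (u : ZMod p × ZMod p) : Option (ZMod p) → ZMod p
  | some m => u.2 - m * u.1
  | none => u.1

section NeZero

variable [NeZero p]

noncomputable def lineThrough (u : ZMod p × ZMod p) (m : Option (ZMod p)) :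
    Finset (ZMod p × ZMod p) :=
  lineWithSlope p m (interceptThrough u m)

@[simp]
theorem mem_lineWithSlope_some {q : ZMod p × ZMod p} {m c : ZMod p} :
    q ∈ lineWithSlope p (some m) c ↔ q.2 = m * q.1 + c := by
  simp [lineWithSlope]

@[simp]
theorem mem_lineWithSlope_none {q : ZMod p × ZMod p} {c : ZMod p} :
    q ∈ lineWithSlope p none c ↔ q.1 = c := by
  simp [lineWithSlope]

theorem mem_lineThrough_self (u : ZMod p × ZMod p) (m : Option (ZMod p)) :
    u ∈ lineThrough u m := by
  cases m <;> simp [lineThrough, interceptThrough]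

theorem isRich_of_card_le_mul {U ℓ : Finset (ZMod p × ZMod p)} {n : ℕ} (hU : #U ≤ n * p)
    (hℓ : n + 1 ≤ #(ℓ ∩ U)) : IsRich p U ℓ := by
  have hp : (0 : ℚ) < p := by exact_mod_cast NeZero.pos p
  have hdiv : (#U : ℚ) / p ≤ n := by
    rw [div_le_iff₀ hp]
    exact_mod_cast hU
  have hℓ' : (n : ℚ) + 1 ≤ #(ℓ ∩ U) := by exact_mod_cast hℓ
  unfold IsRich
  linarith

end NeZero

section Prime

variable [Fact p.Prime]

/-- The direction of the line `uv`; junk (`none`) when `v = u`. -/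
def slopeTo (u v : ZMod p × ZMod p) : Option (ZMod p) :=
  if v.1 = u.1 then none else some ((v.2 - u.2) / (v.1 - u.1))

theorem mem_lineThrough_iff {u v : ZMod p × ZMod p} (hvu : v ≠ u) (m : Option (ZMod p)) :
    v ∈ lineThrough u m ↔ slopeTo u v = m := by
  by_cases h₁ : v.1 = u.1
  · have h₂ : v.2 ≠ u.2 := fun h₂ => hvu (Prod.ext h₁ h₂)
    cases m with
    | none => simp [lineThrough, interceptThrough, slopeTo, h₁]
    | some m =>
      simp only [lineThrough, interceptThrough, slopeTo, h₁, mem_lineWithSlope_some, if_true,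
        reduceCtorEq, iff_false]
      exact fun h => h₂ (by rw [h]; ring)
  · have hne : v.1 - u.1 ≠ 0 := sub_ne_zero.mpr h₁
    cases m with
    | none => simp [lineThrough, interceptThrough, slopeTo, h₁]
    | some m =>
      simp only [lineThrough, interceptThrough, slopeTo, h₁, mem_lineWithSlope_some, if_false,
        Option.some.injEq, div_eq_iff hne]
      constructor <;> intro h <;> linear_combination h

theorem card_lineThrough_inter {U : Finset (ZMod p × ZMod p)} {u : ZMod p × ZMod p}
    (hu : u ∈ U) (m : Option (ZMod p)) :
    #(lineThrough u m ∩ U) = #((U.erase u).filter (slopeTo u · = m)) + 1 := by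
  have hsplit : lineThrough u m ∩ U = insert u ((U.erase u).filter (slopeTo u · = m)) := by
    ext v
    by_cases hvu : v = u
    · subst hvu
      simp [mem_lineThrough_self, hu]
    · simp [mem_lineThrough_iff hvu, hvu, and_comm]
  rw [hsplit, card_insert_of_notMem (by simp)]

theorem sum_card_lineThrough_inter {U : Finset (ZMod p × ZMod p)} {u : ZMod p × ZMod p}
    (hu : u ∈ U) : ∑ m, #(lineThrough u m ∩ U) = #U + p := by
  have hfib : #(U.erase u) = ∑ m, #((U.erase u).filter (slopeTo u · = m)) :=
    card_eq_sum_card_fiberwise fun v _ => mem_univ (slopeTo u v)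
  have hU : #(U.erase u) + 1 = #U := card_erase_add_one hu
  simp only [card_lineThrough_inter hu, sum_add_distrib, ← hfib, sum_const, card_univ,
    Fintype.card_option, ZMod.card, smul_eq_mul, mul_one]
  omega

end Prime

end LinesThrough

theorem every_point_on_rich_line_general (p n r : ℕ) [Fact p.Prime]
    (U : Finset (ZMod p × ZMod p))
    (hpr : (n : ℤ) + 1 ≤ (p : ℤ) - r)
    (hcard : (U.card : ℤ) = n * p - r) :
    ∀ u ∈ U, ∃ (m : Option (ZMod p)) (c : ZMod p),
      u ∈ lineWithSlope p m c ∧ IsRich p U (lineWithSlope p m c) := by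
  intro u hu
  have hlt : ∑ _m : Option (ZMod p), n < ∑ m, #(lineThrough u m ∩ U) := by
    rw [sum_card_lineThrough_inter hu, sum_const, card_univ, Fintype.card_option, ZMod.card,
      smul_eq_mul]
    zify
    linarith
  obtain ⟨m, -, hm⟩ := exists_lt_of_sum_lt hlt
  have hU : #U ≤ n * p := by zify; omega
  exact ⟨m, interceptThrough u m, mem_lineThrough_self u m, isRich_of_card_le_mul hU hm⟩

theorem every_point_on_rich_line (p n r : ℕ) [Fact p.Prime]
    (U : Finset (ZMod p × ZMod p))
    (hn : 1 ≤ n) (hr : r < p) (hpr : (n : ℤ) + 1 ≤ (p : ℤ) - r)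
    (hcard : (U.card : ℤ) = n * p - r) :
    ∀ u ∈ U, ∃ (m : Option (ZMod p)) (c : ZMod p),
      u ∈ lineWithSlope p m c ∧ IsRich p U (lineWithSlope p m c) :=
  every_point_on_rich_line_general p n r U hpr hcard
end

section
/- Let p be a prime, U ⊆ F_p^2 nonempty and finite, and n ∈ ℕ with #U ≤ n·p. If m ∈ F_p is not a U-rich direction, then the specialization at y = m of the Rédei–Szőnyi polynomial satisfies H_{U,n}(x, m) = (x^p - x)^n in F_p[x]. -/
open Finset Polynomial

attribute [local instance] Classical.propDecidable

/-- The Rédei polynomial of `U`, as a polynomial in `x` over `F_p[y]`. -/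
noncomputable def redei (p : ℕ) (U : Finset (ZMod p × ZMod p)) :
    Polynomial (Polynomial (ZMod p)) :=
  ∏ q ∈ U, (Polynomial.X - Polynomial.C (Polynomial.C q.1 * Polynomial.X)
      + Polynomial.C (Polynomial.C q.2))

/-- The (n-th generalized) Szőnyi complement: the quotient of the division of
`(x^p - x)^n` by the Rédei polynomial in `(F_p[y])[x]`. -/
noncomputable def szonyi (p n : ℕ) (U : Finset (ZMod p × ZMod p)) :
    Polynomial (Polynomial (ZMod p)) :=
  ((Polynomial.X ^ p - Polynomial.X) ^ n) /ₘ redei p U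

/-- The Rédei–Szőnyi polynomial `H_{U,n} = R_U · S_{U,n}`. -/
noncomputable def RS (p n : ℕ) (U : Finset (ZMod p × ZMod p)) :
    Polynomial (Polynomial (ZMod p)) :=
  redei p U * szonyi p n U

/-! Specialising `y = m` turns each Rédei factor into `x - (a m - b)`, and the points of `U` with
a given root `a m - b = c` are exactly those on a line of slope `m`. Since `m` is not rich, every
such line carries at most `n` points, so `R_U(x, m)` divides `∏_c (x - c)^n = (x^p - x)^n`.
Division by the monic `R_U` commutes with specialisation, so the remainder `T_{U,n}(x, m)` is the
remainder of `(x^p - x)^n` modulo `R_U(x, m)`, which is zero. -/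

theorem Polynomial.map_mul_divByMonic_of_map_dvd {R S : Type*} [Ring R] [Ring S] (φ : R →+* S)
    {f g : R[X]} (hg : g.Monic) (h : g.map φ ∣ f.map φ) :
    (g * (f /ₘ g)).map φ = f.map φ := by
  conv_rhs => rw [← modByMonic_add_div f g]
  rw [Polynomial.map_add, map_modByMonic φ hg, (modByMonic_eq_zero_iff_dvd (hg.map φ)).2 h,
    zero_add]

theorem FiniteField.prod_X_sub_C_dvd_X_pow_card_sub_X (K : Type*) [Field K] [Fintype K] :
    ∏ c : K, (X - C c) ∣ (X ^ Fintype.card K - X : K[X]) := by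
  have h := prod_multiset_X_sub_C_dvd (X ^ Fintype.card K - X : K[X])
  rwa [roots_X_pow_card_sub_X] at h

theorem FiniteField.prod_X_sub_C_dvd_X_pow_card_sub_X_pow {K ι : Type*} [Field K] [Fintype K]
    [DecidableEq K] (s : Finset ι) (f : ι → K) {n : ℕ} (h : ∀ c, #{i ∈ s | f i = c} ≤ n) :
    ∏ i ∈ s, (X - C (f i)) ∣ (X ^ Fintype.card K - X : K[X]) ^ n := by
  calc ∏ i ∈ s, (X - C (f i))
      = ∏ c, (X - C c) ^ #{i ∈ s | f i = c} := by
        rw [← prod_fiberwise' s f (fun c => X - C c)]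
        exact prod_congr rfl fun c _ => prod_const _
    _ ∣ ∏ c, (X - C c) ^ n := prod_dvd_prod_of_dvd _ _ fun c _ => pow_dvd_pow _ (h c)
    _ = (∏ c, (X - C c)) ^ n := prod_pow _ _ _
    _ ∣ (X ^ Fintype.card K - X) ^ n :=
        pow_dvd_pow_of_dvd (prod_X_sub_C_dvd_X_pow_card_sub_X K) n

theorem card_inter_le_of_not_isRich {p n : ℕ} {U ℓ : Finset (ZMod p × ZMod p)}
    (hℓ : ¬ IsRich p U ℓ) (hcard : #U ≤ n * p) : #(ℓ ∩ U) ≤ n := by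
  have hθ : (#U : ℚ) / p ≤ n :=
    div_le_of_le_mul₀ (Nat.cast_nonneg _) (Nat.cast_nonneg _) (by exact_mod_cast hcard)
  rw [IsRich, not_le] at hℓ
  have h : (#(ℓ ∩ U) : ℚ) < n + 1 := by linarith
  exact Nat.lt_succ_iff.mp (by exact_mod_cast h)

theorem filter_fst_mul_sub_snd_eq {p : ℕ} [NeZero p] (U : Finset (ZMod p × ZMod p))
    (m c : ZMod p) :
    {q ∈ U | q.1 * m - q.2 = c} = lineWithSlope p (some m) (-c) ∩ U := by
  ext q
  simp only [mem_filter, lineWithSlope, mem_inter, mem_univ, true_and]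
  rw [and_comm]
  refine and_congr_left fun _ => ⟨fun h => ?_, fun h => ?_⟩ <;> linear_combination -h

theorem monic_redei (p : ℕ) (U : Finset (ZMod p × ZMod p)) : (redei p U).Monic := by
  refine monic_prod_of_monic _ _ fun q _ => ?_
  have h : X - C (C q.1 * X) + C (C q.2) = X - C (C q.1 * X - C q.2) := by
    rw [C_sub]
    ring
  exact h ▸ monic_X_sub_C _

theorem map_evalRingHom_redei (p : ℕ) (U : Finset (ZMod p × ZMod p)) (m : ZMod p) :
    (redei p U).map (evalRingHom m) = ∏ q ∈ U, (X - C (q.1 * m - q.2)) := by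
  rw [redei, Polynomial.map_prod]
  refine prod_congr rfl fun q _ => ?_
  simp only [Polynomial.map_add, Polynomial.map_sub, Polynomial.map_X, Polynomial.map_C,
    coe_evalRingHom, eval_mul, eval_C, eval_X, map_sub]
  ring

theorem RS_eval_at_nonrich_general (p n : ℕ) [Fact p.Prime]
    (U : Finset (ZMod p × ZMod p)) (hcard : U.card ≤ n * p)
    (m : ZMod p) (hm : ¬ IsRichDir p U (some m)) :
    Polynomial.map (Polynomial.evalRingHom m) (RS p n U)
      = (Polynomial.X ^ p - Polynomial.X) ^ n := by
  have hfiber (c : ZMod p) : #{q ∈ U | q.1 * m - q.2 = c} ≤ n := by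
    rw [filter_fst_mul_sub_snd_eq]
    exact card_inter_le_of_not_isRich (fun h => hm ⟨-c, h⟩) hcard
  have hdvd :=
    FiniteField.prod_X_sub_C_dvd_X_pow_card_sub_X_pow U (fun q => q.1 * m - q.2) hfiber
  rw [ZMod.card, ← map_evalRingHom_redei] at hdvd
  rw [RS, szonyi, map_mul_divByMonic_of_map_dvd _ (monic_redei p U) (by simpa using hdvd)]
  simp

theorem RS_eval_at_nonrich (p n : ℕ) [Fact p.Prime]
    (U : Finset (ZMod p × ZMod p)) (hU : U.Nonempty) (hcard : U.card ≤ n * p)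
    (m : ZMod p) (hm : ¬ IsRichDir p U (some m)) :
    Polynomial.map (Polynomial.evalRingHom m) (RS p n U)
      = (Polynomial.X ^ p - Polynomial.X) ^ n :=
  RS_eval_at_nonrich_general p n U hcard m hm
end

section
/- Let p be a prime and let P, R, S ∈ F_p[x] satisfy P = R·S with R completely reducible. Let P̄ denote the remainder of P upon division by x^p - x (so deg P̄ < p and P ≡ P̄ mod (x^p - x)). Then P divides P'·P̄·S, where P' is the derivative of P. -/
/-- A polynomial over `F_p` is completely reducible if it is a product of
(not necessarily distinct) linear factors `x - α` with `α ∈ F_p`. -/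
def CompletelyReducible (p : ℕ) (f : Polynomial (ZMod p)) : Prop :=
  ∃ s : Multiset (ZMod p), f = (s.map fun a => Polynomial.X - Polynomial.C a).prod

open Polynomial

/-! Let `a` be a root of `R` of multiplicity `m`. Then `a` is a root of `P` of multiplicity
`n ≥ m`, hence of `P'` of multiplicity at least `n - 1`. Every `a ∈ F_p` is a root of
`x^p - x`, so `P̄(a) = P(a) = 0` supplies the missing factor `x - a`. Thus `R ∣ P' P̄`,
and `P = R S ∣ P' P̄ S`. -/

section RootMultiplicity

variable {R : Type*} [CommRing R] [IsDomain R] {P Q : R[X]}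

theorem rootMultiplicity_le_rootMultiplicity_derivative_mul {a : R}
    (hQ : P.IsRoot a → Q.IsRoot a) (h : derivative P * Q ≠ 0) :
    P.rootMultiplicity a ≤ (derivative P * Q).rootMultiplicity a := by
  rw [rootMultiplicity_mul h]
  have hderiv := rootMultiplicity_sub_one_le_derivative_rootMultiplicity_of_ne_zero P a
    (left_ne_zero_of_mul h)
  by_cases ha : P.IsRoot a
  · have hQa := (rootMultiplicity_pos (right_ne_zero_of_mul h)).2 (hQ ha)
    omega
  · rw [rootMultiplicity_eq_zero ha]
    exact Nat.zero_le _

theorem roots_le_roots_derivative_mul (hQ : ∀ a, P.IsRoot a → Q.IsRoot a)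
    (h : derivative P * Q ≠ 0) : P.roots ≤ (derivative P * Q).roots := by
  classical
  exact Multiset.le_iff_count.2 fun a => by
    simpa only [count_roots] using rootMultiplicity_le_rootMultiplicity_derivative_mul (hQ a) h

theorem Multiset.prod_X_sub_C_dvd_derivative_mul {s : Multiset R}
    (hs : (s.map fun a => X - C a).prod ∣ P) (hQ : ∀ a, P.IsRoot a → Q.IsRoot a) :
    (s.map fun a => X - C a).prod ∣ derivative P * Q := by
  by_cases h : derivative P * Q = 0
  · rw [h]
    exact dvd_zero _
  have hP : P ≠ 0 := fun hP => h (by simp [hP])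
  rw [Multiset.prod_X_sub_C_dvd_iff_le_roots h]
  exact ((Multiset.prod_X_sub_C_dvd_iff_le_roots hP s).1 hs).trans
    (roots_le_roots_derivative_mul hQ h)

end RootMultiplicity

theorem FiniteField.eval_modByMonic_X_pow_card_sub_X {K : Type*} [Field K] [Fintype K]
    (P : K[X]) (a : K) : (P %ₘ (X ^ Fintype.card K - X)).eval a = P.eval a :=
  eval₂_modByMonic_eq_self_of_root (f := RingHom.id K) (by simp [FiniteField.pow_card])

theorem divides_derivative_mod_mul (p : ℕ) [Fact p.Prime]
    (P R S : Polynomial (ZMod p))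
    (hP : P = R * S) (hR : CompletelyReducible p R) :
    P ∣ Polynomial.derivative P
        * (P %ₘ (Polynomial.X ^ p - Polynomial.X)) * S := by
  obtain ⟨s, rfl⟩ := hR
  have hRoots : ∀ a, P.IsRoot a → (P %ₘ (X ^ p - X)).IsRoot a := fun a ha => by
    have hEval := FiniteField.eval_modByMonic_X_pow_card_sub_X P a
    rw [ZMod.card] at hEval
    rwa [IsRoot, hEval]
  have hRP : (s.map fun a => X - C a).prod ∣ P := hP ▸ dvd_mul_right _ S
  calc P = (s.map fun a => X - C a).prod * S := hP
    _ ∣ derivative P * (P %ₘ (X ^ p - X)) * S :=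
      mul_dvd_mul (Multiset.prod_X_sub_C_dvd_derivative_mul hRP hRoots) dvd_rfl
end

section
/- Let p be a prime and g ∈ F_p[x] with deg g < p/2. If the polynomial x^p + g(x) is completely reducible over F_p, then either g is a constant polynomial or g(x) = -x. -/
/-!
Let `f = X^p + g` split over `F_p` with `k` distinct roots, so that `p = deg f` is `k` plus the
sum of the excess multiplicities `m_a - 1`. Every root `a` satisfies `a^p = a`, so it is a root
of `f - (X^p - X) = g + X`; if `g ≠ -X` this gives `k ≤ deg g`. A root of multiplicity `m_a`
is a root of `f' = g'` of multiplicity at least `m_a - 1`, and `g' ≠ 0` because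
`0 < deg g < p`; hence the excess is at most `deg g - 1`. Altogether `p ≤ 2 deg g - 1`,
contradicting `2 deg g < p`.
-/

open Polynomial

namespace Polynomial

theorem derivative_ne_zero_of_natCast_natDegree_ne_zero {R : Type*} [CommRing R]
    [NoZeroDivisors R] {g : R[X]} (hg : (g.natDegree : R) ≠ 0) : derivative g ≠ 0 := by
  have hpos : 0 < g.natDegree := Nat.pos_of_ne_zero fun h => hg (by rw [h, Nat.cast_zero])
  have hg0 : g ≠ 0 := fun h => hg (by rw [h, natDegree_zero, Nat.cast_zero])
  intro h
  have hcoeff := congrArg (coeff · (g.natDegree - 1)) h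
  simp only [coeff_derivative, coeff_zero, Nat.sub_add_cancel hpos] at hcoeff
  rw [← Nat.cast_succ, Nat.succ_eq_add_one, Nat.sub_add_cancel hpos] at hcoeff
  exact mul_ne_zero (leadingCoeff_ne_zero.2 hg0) hg hcoeff

theorem card_roots_le_card_roots_toFinset_add_natDegree_derivative {R : Type*} [CommRing R]
    [IsDomain R] [DecidableEq R] (f : R[X]) (hf' : derivative f ≠ 0) :
    Multiset.card f.roots ≤ f.roots.toFinset.card + (derivative f).natDegree := by
  have hexcess : f.roots - f.roots.dedup ≤ (derivative f).roots := by
    refine Multiset.le_iff_count.2 fun a => ?_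
    rw [Multiset.count_sub, Multiset.count_dedup, count_roots, count_roots]
    split_ifs
    · exact rootMultiplicity_sub_one_le_derivative_rootMultiplicity_of_ne_zero f a hf'
    · rw [← count_roots, Multiset.count_eq_zero_of_notMem ‹_›]
      exact Nat.zero_le _
  have hcard := (Multiset.card_le_card hexcess).trans (card_roots' _)
  rw [Multiset.card_sub (Multiset.dedup_le _)] at hcard
  rw [Multiset.card_toFinset]
  have := Multiset.card_le_card (Multiset.dedup_le f.roots)
  omega

theorem card_roots_toFinset_X_pow_card_sub_X_add_le {K : Type*} [Field K] [Fintype K]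
    [DecidableEq K] {h : K[X]} (hh : h ≠ 0) :
    (X ^ Fintype.card K - X + h).roots.toFinset.card ≤ h.natDegree := by
  have hsub : (X ^ Fintype.card K - X + h).roots.toFinset ⊆ h.roots.toFinset := by
    intro a ha
    have hroot := (mem_roots'.1 (Multiset.mem_toFinset.1 ha)).2
    simp only [IsRoot, eval_add, eval_sub, eval_pow, eval_X, FiniteField.pow_card, sub_self,
      zero_add] at hroot
    exact Multiset.mem_toFinset.2 ((mem_roots hh).2 hroot)
  exact (Finset.card_le_card hsub).trans (h.roots.toFinset_card_le.trans (card_roots' h))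

end Polynomial

theorem CompletelyReducible.card_roots {p : ℕ} [Fact p.Prime] {f : (ZMod p)[X]}
    (hf : CompletelyReducible p f) :
    Multiset.card f.roots = f.natDegree := by
  obtain ⟨s, rfl⟩ := hf
  rw [roots_multiset_prod_X_sub_C, natDegree_multiset_prod_X_sub_C_eq_card]

theorem redei_lacunary (p : ℕ) [Fact p.Prime] (g : Polynomial (ZMod p))
    (hdeg : 2 * g.natDegree < p)
    (hred : CompletelyReducible p (Polynomial.X ^ p + g)) :
    (∃ c : ZMod p, g = Polynomial.C c) ∨ g = -Polynomial.X := by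
  by_cases hconst : g.natDegree = 0
  · exact Or.inl ⟨_, eq_C_of_natDegree_eq_zero hconst⟩
  by_cases hgX : g = -X
  · exact Or.inr hgX
  exfalso
  have hfdeg : (X ^ p + g).natDegree = p := by
    rw [natDegree_add_eq_left_of_natDegree_lt (by rw [natDegree_X_pow]; omega), natDegree_X_pow]
  have hg' : derivative g ≠ 0 := derivative_ne_zero_of_natCast_natDegree_ne_zero <|
    (ZMod.natCast_eq_zero_iff _ _).not.2 (Nat.not_dvd_of_pos_of_lt (by omega) (by omega))
  have hf' : derivative (X ^ p + g) = derivative g := by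
    rw [derivative_add, derivative_X_pow, ZMod.natCast_self, C_0, zero_mul, zero_add]
  have hdistinct : (X ^ p + g).roots.toFinset.card ≤ (g + X).natDegree := by
    have hsplit : X ^ p + g = X ^ Fintype.card (ZMod p) - X + (g + X) := by
      rw [ZMod.card]; ring
    rw [hsplit]
    exact card_roots_toFinset_X_pow_card_sub_X_add_le fun h => hgX (eq_neg_of_add_eq_zero_left h)
  have hgXdeg : (g + X).natDegree ≤ g.natDegree :=
    natDegree_add_le_of_degree_le le_rfl (natDegree_X_le.trans (by omega))
  have hcount := card_roots_le_card_roots_toFinset_add_natDegree_derivative _ (hf' ▸ hg')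
  rw [hred.card_roots, hfdeg, hf'] at hcount
  have hg'deg := natDegree_derivative_le g
  omega
end

section
/- Let p be a prime, n ≥ 1, and A, B ∈ ℕ. Let H(x) = x^{np} + g_1(x)·x^{(n-1)p} + ⋯ + g_{n-1}(x)·x^p + g_n(x) ∈ F_p[x], where deg g_1 ≤ A + 1 and deg g_k ≤ B + k for all 1 ≤ k ≤ n. Suppose H = R·S with R ∈ F_p[x] completely reducible and A + B + n + deg S < p. Then H is a product of n factors, each of the form x^p - x or x^p - α for some α ∈ F_p. -/
/-!
Write `H = Hₙ` with `Hₖ = X^p Hₖ₋₁ + gₖ` (`lacunary p g`), and let `Gₖ = X Gₖ₋₁ + gₖ`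
(`lacunary 1 g`) be the same recursion with `p` replaced by `1`. Then `(X^p - X) Q = Hₙ - Gₙ`,
where `Q` is built by the first recursion from the coefficients `G₁, …, Gₙ₋₁` and again
satisfies the degree bounds.

If `Gₙ = 0`, then `X^p - X = ∏ₐ (X - a)` divides `R S`; the factor of it coprime to `R` divides
`S`, so `Q = R₁ S₁` with `R₁` completely reducible and `deg S₁ ≤ deg S`, and induction applies.

If `Gₙ ≠ 0`, then `R ∣ (X^p - X) R'`, as `R` is a product of linear factors, hence
`(X^p - X) H' = R T` for some `T`, and `X^p - X` divides `T Gₙ`. When `H' ≠ 0` this is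
impossible for degree reasons, since `deg T ≤ A + deg S` and `deg Gₙ ≤ B + n`. So `H' = 0` and
`H = w^p`; as `R ∣ w^p` has degree `> (n - 1) p`, `w` has all its `n` roots in `F_p`, and
`H = ∏ (X - a)^p = ∏ (X^p - a)`.
-/

open Polynomial Finset

namespace Polynomial

variable {K : Type*} [CommRing K]

noncomputable def lacunary (q : ℕ) (g : ℕ → K[X]) : ℕ → K[X]
  | 0 => 1
  | n + 1 => X ^ q * lacunary q g n + g (n + 1)

variable {q : ℕ} {g : ℕ → K[X]}

@[simp] theorem lacunary_zero : lacunary q g 0 = 1 := rfl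

theorem lacunary_succ (q : ℕ) (g : ℕ → K[X]) (n : ℕ) :
    lacunary q g (n + 1) = X ^ q * lacunary q g n + g (n + 1) := rfl

theorem lacunary_eq_sum (n : ℕ) :
    lacunary q g n = X ^ (n * q) + ∑ k ∈ Icc 1 n, g k * X ^ ((n - k) * q) := by
  induction n with
  | zero => simp
  | succ n ih =>
    rw [lacunary_succ, ih, mul_add, ← pow_add, add_comm q, ← add_one_mul,
      sum_Icc_succ_top (Nat.le_add_left 1 n) (fun k => g k * X ^ ((n + 1 - k) * q)),
      Nat.sub_self, zero_mul, pow_zero, mul_one, mul_sum, add_assoc]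
    congr 2
    refine sum_congr rfl fun k hk => ?_
    rw [Nat.sub_add_comm (mem_Icc.mp hk).2]
    ring

theorem X_pow_sub_X_pow_mul_lacunary (r : ℕ) (n : ℕ) :
    (X ^ q - X ^ r) * lacunary q (lacunary r g) n =
      lacunary q g (n + 1) - lacunary r g (n + 1) := by
  induction n with
  | zero => simp [lacunary_succ]
  | succ n ih =>
    simp only [lacunary_succ] at *
    linear_combination X ^ q * ih

theorem natDegree_lacunary_le {B n : ℕ} (hg : ∀ k ∈ Icc 1 n, (g k).natDegree ≤ B + k * q) :
    (lacunary q g n).natDegree ≤ B + n * q := by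
  induction n with
  | zero => simp
  | succ n ih =>
    have hX : (X ^ q * lacunary q g n).natDegree ≤ B + (n + 1) * q := by
      refine natDegree_mul_le.trans ?_
      have := natDegree_X_pow_le (R := K) q
      have := ih fun k hk => hg k (Icc_subset_Icc_right (by omega) hk)
      linarith [add_one_mul n q]
    exact (natDegree_add_le _ _).trans (max_le hX (hg _ (by simp)))

theorem monic_and_natDegree_lacunary [Nontrivial K] {n : ℕ}
    (hg : ∀ k ∈ Icc 1 n, (g k).natDegree < k * q) :
    (lacunary q g n).Monic ∧ (lacunary q g n).natDegree = n * q := by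
  induction n with
  | zero => simp
  | succ n ih =>
    obtain ⟨hmon, hdeg⟩ := ih fun k hk => hg k (Icc_subset_Icc_right (by omega) hk)
    have hXmon := (monic_X_pow q).mul hmon
    have hXdeg : (X ^ q * lacunary q g n).natDegree = (n + 1) * q := by
      rw [(monic_X_pow q).natDegree_mul hmon, natDegree_X_pow, hdeg]; ring
    have hlt : (g (n + 1)).degree < (X ^ q * lacunary q g n).degree :=
      degree_lt_degree (hXdeg ▸ hg _ (by simp))
    exact ⟨hXmon.add_of_left hlt, (natDegree_add_eq_left_of_degree_lt hlt).trans hXdeg⟩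

theorem derivative_lacunary (p : ℕ) [CharP K p] (n : ℕ) :
    derivative (lacunary p g n) = ∑ k ∈ Icc 1 n, derivative (g k) * X ^ ((n - k) * p) := by
  simp [lacunary_eq_sum, derivative_X_pow, derivative_mul]

theorem natDegree_sum_mul_X_pow_le {f : ℕ → K[X]} {n A : ℕ}
    (hf : ∀ k ∈ Icc 1 n, (f k).natDegree ≤ (k - 1) * q + A) :
    (∑ k ∈ Icc 1 n, f k * X ^ ((n - k) * q)).natDegree ≤ (n - 1) * q + A := by
  refine natDegree_sum_le_of_forall_le _ _ fun k hk => natDegree_mul_le.trans ?_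
  have hk := mem_Icc.mp hk
  have hsplit : (n - 1) * q = (k - 1) * q + (n - k) * q := by
    rw [← add_mul]; congr 1; omega
  linarith [hf k (mem_Icc.mpr hk), natDegree_X_pow_le (R := K) ((n - k) * q)]

theorem multiset_prod_X_sub_C_dvd_mul_derivative {L : K[X]} {s : Multiset K}
    (hs : ∀ a ∈ s, L.IsRoot a) :
    (s.map fun a => X - C a).prod ∣ L * derivative (s.map fun a => X - C a).prod := by
  induction s using Multiset.induction_on with
  | empty => simp
  | cons a s ih =>
    rw [Multiset.map_cons, Multiset.prod_cons, derivative_mul, derivative_X_sub_C, one_mul,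
      mul_add, mul_left_comm]
    exact dvd_add (mul_dvd_mul (dvd_iff_isRoot.mpr (hs a (Multiset.mem_cons_self a s))) dvd_rfl)
      (mul_dvd_mul_left _ (ih fun b hb => hs b (Multiset.mem_cons_of_mem hb)))

theorem derivative_eq_zero_of_dvd_sub [IsDomain K] {L H R S G : K[X]} (hRS : H = R * S)
    (hR : R ∣ L * derivative R) (hL : L ∣ H - G) (hL0 : L ≠ 0) (hG : G ≠ 0)
    (hdeg : (derivative H).natDegree + S.natDegree + G.natDegree < H.natDegree) :
    derivative H = 0 := by
  by_contra hH'
  have hH0 : H ≠ 0 := by rintro rfl; simp at hdeg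
  have hR0 : R ≠ 0 := by rintro rfl; simp [hRS] at hH0
  have hS0 : S ≠ 0 := by rintro rfl; simp [hRS] at hH0
  obtain ⟨T, hT⟩ : R ∣ L * derivative H := by
    obtain ⟨U, hU⟩ := hR
    exact ⟨U * S + L * derivative S, by rw [hRS, derivative_mul, mul_add, ← mul_assoc, hU]; ring⟩
  have hT0 : T ≠ 0 := by rintro rfl; simp_all
  have hLTG : L ∣ T * G := by
    have hTH : T * H = L * (derivative H * S) := by
      linear_combination T * hRS - S * hT
    rw [show T * G = T * H - T * (H - G) by ring, hTH]
    exact dvd_sub (dvd_mul_right _ _) (hL.mul_left T)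
  have hdegL := natDegree_le_of_dvd hLTG (mul_ne_zero hT0 hG)
  have hdegT := congrArg natDegree hT
  rw [natDegree_mul hL0 hH', natDegree_mul hR0 hT0] at hdegT
  rw [natDegree_mul hT0 hG] at hdegL
  have hdegH := congrArg natDegree hRS
  rw [natDegree_mul hR0 hS0] at hdegH
  omega

theorem exists_eq_pow_of_derivative_eq_zero (p : ℕ) [IsDomain K] [ExpChar K p] [PerfectRing K p]
    {f : K[X]} (hf : derivative f = 0) : ∃ w, f = w ^ p :=
  ⟨_, (expand_contract' p hf).symm.trans (polynomial_expand_eq K p _)⟩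

theorem card_roots_eq_natDegree_of_pow_eq_mul [IsDomain K] {w S : K[X]} {s : Multiset K} {p : ℕ}
    (hw : w ≠ 0) (h : w ^ p = (s.map fun a => X - C a).prod * S) (hS : S.natDegree < p) :
    Multiset.card w.roots = w.natDegree := by
  have hS0 : S ≠ 0 := by rintro rfl; simp [hw] at h
  have hroots : p * Multiset.card w.roots ≥ Multiset.card s := by
    rw [← Multiset.card_nsmul, ← roots_pow]
    refine Multiset.card_le_card ?_
    rw [← roots_multiset_prod_X_sub_C s]
    exact roots.le_of_dvd (pow_ne_zero p hw) ⟨S, h⟩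
  have hdeg := congrArg natDegree h
  have hR0 := (monic_multiset_prod_of_monic s _ fun a _ => monic_X_sub_C a).ne_zero
  rw [natDegree_pow, natDegree_mul hR0 hS0, natDegree_multiset_prod_X_sub_C_eq_card] at hdeg
  refine le_antisymm (card_roots' w) (Nat.le_of_not_lt fun hlt => ?_)
  have : p * (Multiset.card w.roots + 1) ≤ p * w.natDegree := Nat.mul_le_mul_left p hlt
  rw [mul_add, mul_one] at this
  omega

theorem pow_eq_prod_X_pow_sub_C (p : ℕ) [IsDomain K] [ExpChar K p] {w : K[X]} (hw : w.Monic)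
    (hroots : Multiset.card w.roots = w.natDegree) :
    w ^ p = (w.roots.map fun a => X ^ p - C (a ^ p)).prod := by
  conv_lhs => rw [← prod_multiset_X_sub_C_of_monic_of_roots_card_eq hw hroots]
  rw [← Multiset.prod_map_pow]
  simp only [sub_pow_expChar, C_pow]

theorem prod_univ_X_sub_C {F : Type*} [Field F] [Fintype F] :
    ∏ a : F, (X - C a) = X ^ Fintype.card F - X := by
  have hmonic : (X ^ Fintype.card F - X : F[X]).Monic :=
    monic_X_pow_sub (degree_X_le.trans_lt (by exact_mod_cast Fintype.one_lt_card))
  have := prod_multiset_X_sub_C_of_monic_of_roots_card_eq hmonic (by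
    rw [FiniteField.roots_X_pow_card_sub_X,
      FiniteField.X_pow_card_sub_X_natDegree_eq F Fintype.one_lt_card]
    rfl)
  rwa [FiniteField.roots_X_pow_card_sub_X] at this

theorem exists_eq_X_pow_card_sub_X_mul {F : Type*} [Field F] [Fintype F] [DecidableEq F]
    {s : Multiset F} {S : F[X]}
    (h : X ^ Fintype.card F - X ∣ (s.map fun a => X - C a).prod * S) :
    ∃ (t : Multiset F) (T : F[X]), (s.map fun a => X - C a).prod * S =
      (X ^ Fintype.card F - X) * ((t.map fun a => X - C a).prod * T) ∧
      T.natDegree ≤ S.natDegree := by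
  set R := (s.map fun a => X - C a).prod
  set D := ∏ a ∈ s.toFinset, (X - C a)
  set E := ∏ a ∈ univ \ s.toFinset, (X - C a)
  have hED : E * D = X ^ Fintype.card F - X := by
    rw [prod_sdiff (subset_univ _), prod_univ_X_sub_C]
  have hRD : R = ((s - s.dedup).map fun a => X - C a).prod * D := by
    rw [show D = (s.dedup.map fun a => X - C a).prod from rfl, ← Multiset.prod_add,
      ← Multiset.map_add, tsub_add_cancel_of_le (Multiset.dedup_le s)]
  have hR0 : R ≠ 0 := (monic_multiset_prod_of_monic _ _ fun a _ => monic_X_sub_C a).ne_zero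
  have hE : E.Monic := monic_prod_of_monic _ _ fun a _ => monic_X_sub_C a
  have hcop : IsCoprime E R := IsCoprime.prod_left fun a ha =>
    ((irreducible_X_sub_C a).isCoprime_or_dvd R).resolve_right fun hdvd => by
      rw [dvd_iff_isRoot, ← mem_roots hR0, roots_multiset_prod_X_sub_C] at hdvd
      simp_all
  obtain ⟨T, rfl⟩ : E ∣ S := hcop.dvd_of_dvd_mul_left ((dvd_mul_right E D).trans (hED ▸ h))
  refine ⟨s - s.dedup, T, by rw [← hED, hRD]; ring, ?_⟩
  rcases eq_or_ne T 0 with rfl | hT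
  · simp
  · rw [hE.natDegree_mul' hT]
    omega

end Polynomial

namespace ZMod

variable {p : ℕ} [Fact p.Prime] {A B n : ℕ} {g : ℕ → (ZMod p)[X]}

theorem exists_lacunary_eq_prod_X_pow_sub_C {s : Multiset (ZMod p)} {S : (ZMod p)[X]}
    (hRS : lacunary p g (n + 1) = (s.map fun a => X - C a).prod * S)
    (hG : lacunary 1 g (n + 1) ≠ 0) (hg1 : (g 1).natDegree ≤ A + 1)
    (hgk : ∀ k ∈ Icc 1 (n + 1), (g k).natDegree ≤ B + k)
    (hdeg : A + B + (n + 1) + S.natDegree < p) :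
    ∃ w : (ZMod p)[X], Multiset.card w.roots = n + 1 ∧
      lacunary p g (n + 1) = (w.roots.map fun a => X ^ p - C (a ^ p)).prod := by
  have hp : 1 < p := (Fact.out : p.Prime).one_lt
  obtain ⟨hHmonic, hHdeg⟩ := monic_and_natDegree_lacunary (q := p) (n := n + 1) fun k hk =>
    (hgk k hk).trans_lt ((by simp at hk; omega : B + k < p).trans_le
      (Nat.le_mul_of_pos_left p (mem_Icc.mp hk).1))
  have hH' : (derivative (lacunary p g (n + 1))).natDegree ≤ n * p + A := by
    rw [derivative_lacunary]
    refine (natDegree_sum_mul_X_pow_le (A := A) fun k hk =>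
      (natDegree_derivative_le _).trans ?_).trans (by simp)
    obtain ⟨hk1, hkn⟩ := mem_Icc.mp hk
    rcases hk1.eq_or_lt with rfl | hk2
    · omega
    · have := hgk k hk
      have := Nat.le_mul_of_pos_left p (by omega : 0 < k - 1)
      omega
  have hGdeg : (lacunary 1 g (n + 1)).natDegree ≤ B + (n + 1) := by
    simpa using natDegree_lacunary_le (q := 1) (by simpa using hgk)
  have hL := X_pow_sub_X_pow_mul_lacunary (q := p) (g := g) 1 n
  rw [pow_one] at hL
  have hH'0 : derivative (lacunary p g (n + 1)) = 0 := by
    refine derivative_eq_zero_of_dvd_sub hRS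
      (multiset_prod_X_sub_C_dvd_mul_derivative fun a _ => by simp [ZMod.pow_card])
      ⟨_, hL.symm⟩ (FiniteField.X_pow_card_sub_X_ne_zero _ hp) hG ?_
    rw [hHdeg, add_one_mul]
    omega
  obtain ⟨w, hw⟩ := exists_eq_pow_of_derivative_eq_zero p hH'0
  have hwmonic : w.Monic := by
    have := hHmonic.leadingCoeff
    rwa [hw, leadingCoeff_pow, ZMod.pow_card] at this
  have hwdeg : w.natDegree = n + 1 := by
    rw [hw, natDegree_pow, mul_comm] at hHdeg
    exact Nat.eq_of_mul_eq_mul_right (by omega) hHdeg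
  have hroots := card_roots_eq_natDegree_of_pow_eq_mul hwmonic.ne_zero (hw ▸ hRS) (by omega)
  exact ⟨w, hroots.trans hwdeg, hw.trans (pow_eq_prod_X_pow_sub_C p hwmonic hroots)⟩

theorem exists_multiset_prod_eq_lacunary {s : Multiset (ZMod p)} {S : (ZMod p)[X]}
    (hRS : lacunary p g n = (s.map fun a => X - C a).prod * S) (hg1 : (g 1).natDegree ≤ A + 1)
    (hgk : ∀ k ∈ Icc 1 n, (g k).natDegree ≤ B + k) (hdeg : A + B + n + S.natDegree < p) :
    ∃ m : Multiset (ZMod p)[X], Multiset.card m = n ∧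
      (∀ f ∈ m, f = X ^ p - X ∨ ∃ α : ZMod p, f = X ^ p - C α) ∧ lacunary p g n = m.prod := by
  induction n generalizing g s S with
  | zero => exact ⟨0, rfl, by simp, by simp⟩
  | succ n ih =>
    by_cases hG : lacunary 1 g (n + 1) = 0
    · have hL := X_pow_sub_X_pow_mul_lacunary (q := p) (g := g) 1 n
      rw [pow_one, hG, sub_zero] at hL
      obtain ⟨t, T, hRT, hT⟩ := exists_eq_X_pow_card_sub_X_mul (F := ZMod p)
        (by rw [ZMod.card, ← hRS, ← hL]; exact dvd_mul_right _ _)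
      rw [ZMod.card] at hRT
      have hQ : lacunary p (lacunary 1 g) n = (t.map fun a => X - C a).prod * T :=
        mul_left_cancel₀ (FiniteField.X_pow_card_sub_X_ne_zero _ (Fact.out : p.Prime).one_lt)
          (by rw [hL, hRS, hRT])
      have hG1 : (lacunary 1 g 1).natDegree ≤ A + 1 := natDegree_lacunary_le (q := 1) (by simpa)
      have hGk : ∀ k ∈ Icc 1 n, (lacunary 1 g k).natDegree ≤ B + k := fun k hk => by
        simpa using natDegree_lacunary_le (q := 1) fun j hj => by
          simpa using hgk j (Icc_subset_Icc_right (by simp at hk; omega) hj)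
      obtain ⟨m, hcard, hm, hprod⟩ := ih hQ hG1 hGk (by omega)
      refine ⟨(X ^ p - X) ::ₘ m, by simp [hcard], ?_, by rw [← hL, hprod, Multiset.prod_cons]⟩
      intro f hf
      rcases Multiset.mem_cons.mp hf with rfl | hf
      · exact Or.inl rfl
      · exact hm f hf
    · obtain ⟨w, hcard, hw⟩ := exists_lacunary_eq_prod_X_pow_sub_C hRS hG hg1 hgk hdeg
      refine ⟨w.roots.map fun a => X ^ p - C (a ^ p), by simp [hcard], ?_, hw⟩
      simp only [Multiset.mem_map]
      rintro f ⟨a, -, rfl⟩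
      exact Or.inr ⟨_, rfl⟩

end ZMod

theorem lacunary_high_degree_general (p n A B : ℕ) [Fact p.Prime]
    (g : ℕ → Polynomial (ZMod p)) (H R S : Polynomial (ZMod p))
    (hH : H = Polynomial.X ^ (n * p)
        + ∑ k ∈ Finset.Icc 1 n, g k * Polynomial.X ^ ((n - k) * p))
    (hg1 : (g 1).natDegree ≤ A + 1)
    (hgk : ∀ k ∈ Finset.Icc 1 n, (g k).natDegree ≤ B + k)
    (hRS : H = R * S) (hR : CompletelyReducible p R)
    (hdeg : A + B + n + S.natDegree < p) :
    ∃ f : Fin n → Polynomial (ZMod p),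
      (∀ i, f i = Polynomial.X ^ p - Polynomial.X
        ∨ ∃ α : ZMod p, f i = Polynomial.X ^ p - Polynomial.C α) ∧
      H = ∏ i, f i := by
  obtain ⟨s, rfl⟩ := hR
  rw [← lacunary_eq_sum] at hH
  subst hH
  obtain ⟨m, hcard, hm, hprod⟩ := ZMod.exists_multiset_prod_eq_lacunary hRS hg1 hgk hdeg
  obtain ⟨l, rfl⟩ : ∃ l : List (ZMod p)[X], (l : Multiset _) = m := ⟨m.toList, m.coe_toList⟩
  obtain rfl : l.length = n := hcard
  refine ⟨l.get, fun i => hm _ (List.get_mem l i), ?_⟩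
  rw [hprod, Multiset.prod_coe, ← List.prod_ofFn, List.ofFn_get]

theorem lacunary_high_degree (p n A B : ℕ) [Fact p.Prime] (hn : 1 ≤ n)
    (g : ℕ → Polynomial (ZMod p)) (H R S : Polynomial (ZMod p))
    (hH : H = Polynomial.X ^ (n * p)
        + ∑ k ∈ Finset.Icc 1 n, g k * Polynomial.X ^ ((n - k) * p))
    (hg1 : (g 1).natDegree ≤ A + 1)
    (hgk : ∀ k ∈ Finset.Icc 1 n, (g k).natDegree ≤ B + k)
    (hRS : H = R * S) (hR : CompletelyReducible p R)
    (hdeg : A + B + n + S.natDegree < p) :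
    ∃ f : Fin n → Polynomial (ZMod p),
      (∀ i, f i = Polynomial.X ^ p - Polynomial.X
        ∨ ∃ α : ZMod p, f i = Polynomial.X ^ p - Polynomial.C α) ∧
      H = ∏ i, f i :=
  lacunary_high_degree_general p n A B g H R S hH hg1 hgk hRS hR hdeg
end
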